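/- arXiv:math/0501004 — 2 statements merged into one kernel-verified Lean document; each statement's English description precedes it below -/
import Mathlib

section
/- For every integer t ≥ 1 and every ε with 0 < ε < 1, there exists p₀ = p₀(t, ε) such that for every prime p > p₀ and every set of residues {b₁, …, b_t} ⊆ ℤ/pℤ, there exists a weight function μ : ℤ/pℤ → [0,1] satisfying: (i) μ̂(0) = 1 (equivalently, 𝔼(μ) = p⁻¹); (ii) |μ̂(b_i) − 1| < ε² for all i = 1, …, t; and (iii) Σ_{a ∈ ℤ/pℤ} |μ̂(a)| ≤ (6/ε)^t. -/
/-!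
Take `μ = ν / ∑ ν` with `ν(n) = ∏ᵢ w(bᵢ n)`, where `w = 1_I ⋆ 1_I` is the autocorrelation of the
indicator of `I = {0, …, K-1}` and `K ≈ εp/6`. Since `ŵ = |1̂_I|² ≥ 0`, and nonnegativity of the
Fourier transform survives dilations `n ↦ f(bn)` and pointwise products (whose transform is a
convolution), `μ̂ ≥ 0`. Hence `∑ₐ |μ̂(a)| = ∑ₐ μ̂(a) = p μ(0) = p Kᵗ / ∑ ν`, while the `c = 0` terms
of the same convolution identities give `∑ ν ≥ p (K²/p)ᵗ`; so the ℓ¹ norm is at most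
`(p/K)ᵗ ≤ (6/ε)ᵗ`. Finally `ν` vanishes unless every `bᵢ n` is within `K` of `0`, so
`|μ̂(bᵢ) - 1| = ∑ₙ μ(n) (1 - cos (2π bᵢ n / p)) ≤ 2π²K²/p² < ε²`.
-/

open Finset

/-- Fourier transform on `ℤ/N`: `f̂(a) = ∑_{n ∈ ℤ/N} f(n) e^{2πi a n / N}`. -/
noncomputable def ft (N : ℕ) (f : ZMod N → ℂ) (a : ZMod N) : ℂ :=
  ∑ n ∈ Finset.range N,
    f n * Complex.exp (2 * Real.pi * Complex.I * (a.val : ℂ) * (n : ℂ) / (N : ℂ))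

/-- Fourier transform of a real-valued function. -/
noncomputable def ftR (N : ℕ) (f : ZMod N → ℝ) (a : ZMod N) : ℂ :=
  ft N (fun n => (f n : ℂ)) a

open ZMod
open scoped ComplexOrder

section Fourier

variable {N : ℕ} [NeZero N]

lemma sum_range_eq_sum_zmod {M : Type*} [AddCommMonoid M] (f : ℕ → M) :
    ∑ n ∈ range N, f n = ∑ x : ZMod N, f x.val := by
  obtain ⟨n, rfl⟩ : ∃ n, N = n + 1 := Nat.exists_eq_succ_of_ne_zero (NeZero.ne N)
  exact (Fin.sum_univ_eq_sum_range f _).symm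

lemma ft_eq_sum_stdAddChar (f : ZMod N → ℂ) (a : ZMod N) :
    ft N f a = ∑ n : ZMod N, f n * stdAddChar (a * n) := by
  rw [ft, sum_range_eq_sum_zmod]
  refine sum_congr rfl fun n _ => ?_
  have h : a * n = ((a.val * n.val : ℕ) : ℤ) := by push_cast; simp only [natCast_zmod_val]
  rw [natCast_zmod_val, h, stdAddChar_coe]
  push_cast
  ring_nf

lemma ft_eq_dft_neg (f : ZMod N → ℂ) (a : ZMod N) : ft N f a = 𝓕 f (-a) := by
  simp [ft_eq_sum_stdAddChar, dft_apply, mul_comm]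

lemma ft_inversion (f : ZMod N → ℂ) (n : ZMod N) :
    f n = (N : ℂ)⁻¹ * ∑ a, ft N f a * stdAddChar (-(a * n)) := by
  have h := congrFun ((dft (N := N) (E := ℂ)).symm_apply_apply f) n
  rw [invDFT_apply', dft_apply] at h
  rw [← h, smul_eq_mul]
  congr 1
  refine Fintype.sum_equiv (Equiv.neg _) _ _ fun a => ?_
  simp [ft_eq_dft_neg, mul_comm]

lemma sum_stdAddChar_mul (a : ZMod N) :
    ∑ n : ZMod N, stdAddChar (a * n) = if a = 0 then (N : ℂ) else 0 := by
  simp_rw [mul_comm a]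
  rw [AddChar.sum_mulShift a (isPrimitive_stdAddChar N), ZMod.card]
  split_ifs <;> simp

lemma ft_mul (f g : ZMod N → ℂ) (a : ZMod N) :
    ft N (fun n => f n * g n) a = (N : ℂ)⁻¹ * ∑ c, ft N f c * ft N g (a - c) := by
  rw [ft_eq_sum_stdAddChar (fun n => f n * g n)]
  conv_lhs => enter [2, n]; rw [ft_inversion f n]
  simp only [ft_eq_sum_stdAddChar g, mul_sum, sum_mul]
  rw [sum_comm]
  refine sum_congr rfl fun c _ => sum_congr rfl fun n _ => ?_
  rw [show (a - c) * n = -(c * n) + a * n by ring, AddChar.map_add_eq_mul]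
  ring

lemma ft_comp_mul_left (f : ZMod N → ℂ) (b a : ZMod N) :
    ft N (fun n => f (b * n)) a = ∑ c with c * b = a, ft N f c := by
  have hchar (c n : ZMod N) :
      stdAddChar (-(c * (b * n))) * stdAddChar (a * n) = stdAddChar ((a - c * b) * n) := by
    rw [← AddChar.map_add_eq_mul]; ring_nf
  rw [ft_eq_sum_stdAddChar]
  conv_lhs => enter [2, n]; rw [ft_inversion f (b * n)]
  simp only [mul_sum, sum_mul, mul_assoc, hchar]
  rw [sum_comm, sum_filter]
  refine sum_congr rfl fun c _ => ?_
  rw [← mul_sum, ← mul_sum, sum_stdAddChar_mul]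
  simp only [sub_eq_zero, eq_comm (a := a)]
  have hN : (N : ℂ) ≠ 0 := NeZero.ne _
  split_ifs
  · field_simp
  · simp

lemma sum_ft (f : ZMod N → ℂ) : ∑ a, ft N f a = N * f 0 := by
  rw [ft_inversion f 0]
  simp [mul_inv_cancel_left₀ (NeZero.ne (N : ℂ))]

lemma ft_const_one (a : ZMod N) : ft N (fun _ => 1) a = if a = 0 then (N : ℂ) else 0 := by
  simp [ft_eq_sum_stdAddChar, sum_stdAddChar_mul]

end Fourier

section NonnegFT

variable {N : ℕ} [NeZero N]

/-- In `ComplexOrder`, `0 ≤ z` means that `z` is a nonnegative real number. -/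
def HasNonnegFT (f : ZMod N → ℝ) : Prop := ∀ a, 0 ≤ ftR N f a

lemma ftR_mul (f g : ZMod N → ℝ) (a : ZMod N) :
    ftR N (f * g) a = (N : ℂ)⁻¹ * ∑ c, ftR N f c * ftR N g (a - c) := by
  simp only [ftR, Pi.mul_apply, Complex.ofReal_mul, ft_mul]

lemma ftR_comp_mul_left (f : ZMod N → ℝ) (b a : ZMod N) :
    ftR N (fun n => f (b * n)) a = ∑ c with c * b = a, ftR N f c :=
  ft_comp_mul_left (fun n => (f n : ℂ)) b a

lemma ftR_zero (f : ZMod N → ℝ) : ftR N f 0 = ((∑ n, f n : ℝ) : ℂ) := by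
  simp [ftR, ft_eq_sum_stdAddChar]

lemma hasNonnegFT_one : HasNonnegFT (1 : ZMod N → ℝ) := fun a => by
  simp only [ftR, Pi.one_apply, Complex.ofReal_one, ft_const_one]
  split_ifs <;> simp

namespace HasNonnegFT

variable {f g : ZMod N → ℝ}

lemma sum_nonneg (hf : HasNonnegFT f) : 0 ≤ ∑ n, f n := by
  simpa only [ftR_zero, Complex.zero_le_real] using hf 0

lemma mul (hf : HasNonnegFT f) (hg : HasNonnegFT g) : HasNonnegFT (f * g) := fun a => by
  rw [ftR_mul]
  exact mul_nonneg (by positivity) (Finset.sum_nonneg fun c _ => mul_nonneg (hf c) (hg _))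

lemma prod {ι : Type*} (s : Finset ι) {f : ι → ZMod N → ℝ} (hf : ∀ i ∈ s, HasNonnegFT (f i)) :
    HasNonnegFT (∏ i ∈ s, f i) :=
  prod_induction f HasNonnegFT (fun _ _ => mul) hasNonnegFT_one hf

lemma comp_mul_left (hf : HasNonnegFT f) (b : ZMod N) : HasNonnegFT fun n => f (b * n) :=
  fun a => by
    rw [ftR_comp_mul_left]
    exact Finset.sum_nonneg fun c _ => hf c

lemma div_const (hf : HasNonnegFT f) {S : ℝ} (hS : 0 ≤ S) : HasNonnegFT fun n => f n / S :=
  fun a => by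
    have hfa := hf a
    simp only [ftR, ft_eq_sum_stdAddChar, Complex.ofReal_div, div_mul_eq_mul_div,
      ← sum_div] at hfa ⊢
    exact div_nonneg hfa (Complex.zero_le_real.2 hS)

lemma sum_mul_sum_le (hf : HasNonnegFT f) (hg : HasNonnegFT g) :
    (∑ n, f n) * ∑ n, g n ≤ N * ∑ n, f n * g n := by
  have h := ftR_mul f g 0
  have hterm : ftR N f 0 * ftR N g 0 ≤ ∑ c, ftR N f c * ftR N g (0 - c) := by
    simpa using single_le_sum (fun c _ => mul_nonneg (hf c) (hg (0 - c))) (mem_univ 0)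
  rw [eq_inv_mul_iff_mul_eq₀ (NeZero.ne (N : ℂ))] at h
  have key : ftR N f 0 * ftR N g 0 ≤ N * ftR N (f * g) 0 := by rw [h]; exact hterm
  simp only [ftR_zero, Pi.mul_apply] at key
  exact_mod_cast key

lemma sum_le_sum_comp_mul_left (hf : HasNonnegFT f) (b : ZMod N) :
    ∑ n, f n ≤ ∑ n, f (b * n) := by
  rw [← Complex.real_le_real, ← ftR_zero, ← ftR_zero (fun n => f (b * n)), ftR_comp_mul_left]
  exact single_le_sum (fun c _ => hf c) (by simp)

lemma mul_prod_sum_le {ι : Type*} [DecidableEq ι] (s : Finset ι) {f : ι → ZMod N → ℝ}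
    (hf : ∀ i ∈ s, HasNonnegFT (f i)) :
    N * ∏ i ∈ s, ∑ n, f i n ≤ N ^ #s * ∑ n, ∏ i ∈ s, f i n := by
  induction s using Finset.induction_on with
  | empty => simp
  | insert j s hj ih =>
    have hfj := hf j (mem_insert_self j s)
    have hfs : ∀ i ∈ s, HasNonnegFT (f i) := fun i hi => hf i (mem_insert_of_mem hi)
    have hprod := (prod s hfs).sum_mul_sum_le hfj
    simp only [Finset.prod_apply] at hprod
    rw [prod_insert hj, card_insert_of_notMem hj, pow_succ]
    simp only [prod_insert hj]
    calc (N : ℝ) * ((∑ n, f j n) * ∏ i ∈ s, ∑ n, f i n)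
        = (∑ n, f j n) * (N * ∏ i ∈ s, ∑ n, f i n) := by ring
      _ ≤ (∑ n, f j n) * (N ^ #s * ∑ n, ∏ i ∈ s, f i n) :=
          mul_le_mul_of_nonneg_left (ih hfs) hfj.sum_nonneg
      _ = N ^ #s * ((∑ n, ∏ i ∈ s, f i n) * ∑ n, f j n) := by ring
      _ ≤ N ^ #s * (N * ∑ n, (∏ i ∈ s, f i n) * f j n) := by gcongr
      _ = N ^ #s * N * ∑ n, f j n * ∏ i ∈ s, f i n := by simp only [mul_comm]; ring

lemma sum_norm_ftR (hf : HasNonnegFT f) : ∑ a, ‖ftR N f a‖ = N * f 0 := by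
  have h := sum_ft (fun n => (f n : ℂ))
  rw [← Complex.ofReal_inj]
  push_cast
  simp_rw [Complex.norm_of_nonneg' (hf _)]
  exact h

end HasNonnegFT

end NonnegFT

section Flatness

variable {N : ℕ} [NeZero N]

open Real in
lemma one_sub_re_stdAddChar_intCast_le (d : ℤ) :
    1 - (stdAddChar (d : ZMod N)).re ≤ 2 * π ^ 2 * d ^ 2 / N ^ 2 := by
  have h : (stdAddChar (d : ZMod N)).re = cos (2 * π * d / N) := by
    rw [stdAddChar_coe, ← Complex.exp_ofReal_mul_I_re]
    congr 2
    push_cast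
    ring
  rw [h]
  calc 1 - cos (2 * π * d / N) ≤ (2 * π * d / N) ^ 2 / 2 := by
        linarith [one_sub_sq_div_two_le_cos (x := 2 * π * d / N)]
    _ = 2 * π ^ 2 * d ^ 2 / N ^ 2 := by ring

lemma norm_ftR_sub_one_le {μ : ZMod N → ℝ} (hμ : ∀ n, 0 ≤ μ n) (hsum : ∑ n, μ n = 1)
    (hpos : HasNonnegFT μ) {b : ZMod N} {δ : ℝ}
    (hδ : ∀ n, μ n ≠ 0 → 1 - (stdAddChar (b * n)).re ≤ δ) :
    ‖ftR N μ b - 1‖ ≤ δ := by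
  have hre : (ftR N μ b).re = ∑ n, μ n * (stdAddChar (b * n)).re := by
    simp [ftR, ft_eq_sum_stdAddChar, Complex.re_sum]
  have hreal : ftR N μ b = ((ftR N μ b).re : ℂ) :=
    Complex.ext rfl (Complex.nonneg_iff.1 (hpos b)).2.symm
  have hgap : 1 - (ftR N μ b).re = ∑ n, μ n * (1 - (stdAddChar (b * n)).re) := by
    simp only [hre, mul_sub, mul_one, sum_sub_distrib, hsum]
  have hterm (n : ZMod N) : 0 ≤ 1 - (stdAddChar (b * n)).re := by
    have := Complex.re_le_norm (stdAddChar (b * n))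
    rw [AddChar.norm_apply] at this
    linarith
  have hle : ∑ n, μ n * (1 - (stdAddChar (b * n)).re) ≤ ∑ n, μ n * δ := by
    refine sum_le_sum fun n _ => ?_
    by_cases hn : μ n = 0
    · simp [hn]
    · exact mul_le_mul_of_nonneg_left (hδ n hn) (hμ n)
  calc ‖ftR N μ b - 1‖ = |1 - (ftR N μ b).re| := by
        rw [hreal, ← Complex.ofReal_one, ← Complex.ofReal_sub, Complex.norm_real,
          Real.norm_eq_abs, abs_sub_comm, Complex.ofReal_re]
    _ = 1 - (ftR N μ b).re :=
        abs_of_nonneg (hgap ▸ sum_nonneg fun n _ => mul_nonneg (hμ n) (hterm n))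
    _ ≤ ∑ n, μ n * δ := hgap ▸ hle
    _ = δ := by rw [← sum_mul, hsum, one_mul]

end Flatness

section FlatteningWeight

variable {N : ℕ}

def intervalIndicator (K : ℕ) (x : ZMod N) : ℝ := if x.val < K then 1 else 0

lemma intervalIndicator_nonneg (K : ℕ) (x : ZMod N) : 0 ≤ intervalIndicator K x := by
  unfold intervalIndicator; split_ifs <;> norm_num

variable [NeZero N]

def autocorr (g : ZMod N → ℝ) (m : ZMod N) : ℝ := ∑ x, g x * g (x + m)

lemma ftR_autocorr (g : ZMod N → ℝ) (a : ZMod N) :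
    ftR N (autocorr g) a = ((‖ftR N g a‖ ^ 2 : ℝ) : ℂ) := by
  push_cast
  rw [← Complex.mul_conj']
  simp only [ftR, ft_eq_sum_stdAddChar, autocorr, map_sum, map_mul, Complex.conj_ofReal,
    ← AddChar.map_neg_eq_conj, Complex.ofReal_sum, Complex.ofReal_mul, sum_mul, mul_sum]
  rw [sum_comm]
  refine sum_congr rfl fun x _ => Fintype.sum_equiv (Equiv.addLeft x) _ _ fun m => ?_
  have hchar : stdAddChar (a * m) = stdAddChar (a * (x + m)) * stdAddChar (-(a * x)) := by
    rw [← AddChar.map_add_eq_mul]; ring_nf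
  simp only [Equiv.coe_addLeft, hchar]
  ring

lemma hasNonnegFT_autocorr (g : ZMod N → ℝ) : HasNonnegFT (autocorr g) := fun a => by
  rw [ftR_autocorr]
  exact Complex.zero_le_real.2 (sq_nonneg _)

lemma autocorr_nonneg {g : ZMod N → ℝ} (hg : ∀ x, 0 ≤ g x) (m : ZMod N) : 0 ≤ autocorr g m :=
  Finset.sum_nonneg fun x _ => mul_nonneg (hg x) (hg _)

lemma sum_autocorr (g : ZMod N → ℝ) : ∑ m, autocorr g m = (∑ x, g x) ^ 2 := by
  simp only [autocorr, sq, sum_mul_sum]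
  rw [sum_comm]
  exact sum_congr rfl fun x _ => Fintype.sum_equiv (Equiv.addLeft x) _ _ fun m => rfl

lemma sum_intervalIndicator {K : ℕ} (hK : K ≤ N) : ∑ x : ZMod N, intervalIndicator K x = K := by
  refine (sum_range_eq_sum_zmod fun n => if n < K then (1 : ℝ) else 0).symm.trans ?_
  rw [sum_boole,
    show {n ∈ range N | n < K} = range K by ext n; simp only [mem_filter, mem_range]; omega,
    card_range]

lemma autocorr_intervalIndicator_zero {K : ℕ} (hK : K ≤ N) :
    autocorr (intervalIndicator (N := N) K) 0 = K := by
  rw [← sum_intervalIndicator hK]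
  refine sum_congr rfl fun x _ => ?_
  rw [add_zero, intervalIndicator]
  split_ifs <;> norm_num

lemma exists_intCast_eq_of_autocorr_intervalIndicator_ne_zero {K : ℕ} {m : ZMod N}
    (h : autocorr (intervalIndicator K) m ≠ 0) : ∃ d : ℤ, |d| < K ∧ (d : ZMod N) = m := by
  obtain ⟨x, -, hx⟩ := exists_ne_zero_of_sum_ne_zero h
  have hx₁ : x.val < K := by by_contra hc; simp [intervalIndicator, hc] at hx
  have hx₂ : (x + m).val < K := by by_contra hc; simp [intervalIndicator, hc] at hx
  refine ⟨(x + m).val - x.val, abs_sub_lt_iff.2 ⟨by omega, by omega⟩, ?_⟩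
  push_cast
  simp only [natCast_zmod_val, add_sub_cancel_left]

def flatteningWeight (K : ℕ) {t : ℕ} (b : Fin t → ZMod N) (n : ZMod N) : ℝ :=
  ∏ i, autocorr (intervalIndicator K) (b i * n)

variable {K t : ℕ} (b : Fin t → ZMod N)

lemma flatteningWeight_nonneg (n : ZMod N) : 0 ≤ flatteningWeight K b n :=
  prod_nonneg fun _ _ => autocorr_nonneg (intervalIndicator_nonneg K) _

lemma flatteningWeight_eq_prod :
    flatteningWeight K b = ∏ i, fun n => autocorr (intervalIndicator K) (b i * n) := by
  ext n
  simp [flatteningWeight, Finset.prod_apply]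

lemma hasNonnegFT_flatteningWeight : HasNonnegFT (flatteningWeight K b) := by
  rw [flatteningWeight_eq_prod]
  exact HasNonnegFT.prod univ fun i _ => (hasNonnegFT_autocorr _).comp_mul_left (b i)

lemma flatteningWeight_zero (hK : K ≤ N) : flatteningWeight K b 0 = K ^ t := by
  simp [flatteningWeight, autocorr_intervalIndicator_zero hK]

lemma mul_pow_le_sum_flatteningWeight (hK : K ≤ N) :
    N * ((K : ℝ) ^ 2) ^ t ≤ N ^ t * ∑ n, flatteningWeight K b n := by
  have hw (i : Fin t) : HasNonnegFT fun n => autocorr (intervalIndicator K) (b i * n) :=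
    (hasNonnegFT_autocorr _).comp_mul_left (b i)
  have hsum (i : Fin t) : (K : ℝ) ^ 2 ≤ ∑ n, autocorr (intervalIndicator K) (b i * n) := by
    rw [← sum_intervalIndicator hK, ← sum_autocorr]
    exact (hasNonnegFT_autocorr _).sum_le_sum_comp_mul_left (b i)
  calc (N : ℝ) * ((K : ℝ) ^ 2) ^ t
      = N * ∏ _i : Fin t, (K : ℝ) ^ 2 := by rw [prod_const, card_univ, Fintype.card_fin]
    _ ≤ N * ∏ i, ∑ n, autocorr (intervalIndicator K) (b i * n) := by
        gcongr with i
        exact hsum i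
    _ ≤ N ^ t * ∑ n, flatteningWeight K b n := by
        have := HasNonnegFT.mul_prod_sum_le univ fun i _ => hw i
        rwa [card_univ, Fintype.card_fin] at this

lemma exists_intCast_eq_of_flatteningWeight_ne_zero {n : ZMod N}
    (h : flatteningWeight K b n ≠ 0) (i : Fin t) : ∃ d : ℤ, |d| < K ∧ (d : ZMod N) = b i * n :=
  exists_intCast_eq_of_autocorr_intervalIndicator_ne_zero
    ((prod_ne_zero_iff.1 h) i (mem_univ i))

end FlatteningWeight

open Real in
theorem exists_flat_weight {N K t : ℕ} [NeZero N] (hK₀ : 0 < K) (hK : K ≤ N)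
    (b : Fin t → ZMod N) :
    ∃ μ : ZMod N → ℝ, (∀ n, μ n ∈ Set.Icc (0 : ℝ) 1) ∧ ftR N μ 0 = 1 ∧
      (∀ i, ‖ftR N μ (b i) - 1‖ ≤ 2 * π ^ 2 * K ^ 2 / N ^ 2) ∧
      ∑ a, ‖ftR N μ a‖ ≤ ((N : ℝ) / K) ^ t := by
  set ν := flatteningWeight K b
  set S := ∑ n, ν n
  have hN : (0 : ℝ) < N := by exact_mod_cast Nat.pos_of_neZero N
  have hS : N * ((K : ℝ) ^ 2) ^ t ≤ N ^ t * S := mul_pow_le_sum_flatteningWeight b hK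
  have hS₀ : 0 < S := pos_of_mul_pos_right (hS.trans_lt' (by positivity)) (by positivity)
  have hμ₀ (n : ZMod N) : 0 ≤ ν n / S := div_nonneg (flatteningWeight_nonneg b n) hS₀.le
  have hμ₁ : ∑ n, ν n / S = 1 := by rw [← sum_div, div_self hS₀.ne']
  have hμ : HasNonnegFT fun n => ν n / S := (hasNonnegFT_flatteningWeight b).div_const hS₀.le
  refine ⟨fun n => ν n / S, fun n => ⟨hμ₀ n, ?_⟩, by rw [ftR_zero, hμ₁]; simp, fun i => ?_, ?_⟩
  · exact (div_le_one hS₀).2 (single_le_sum (fun m _ => flatteningWeight_nonneg b m) (mem_univ n))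
  · refine norm_ftR_sub_one_le hμ₀ hμ₁ hμ fun n hn => ?_
    obtain ⟨d, hdK, hd⟩ :=
      exists_intCast_eq_of_flatteningWeight_ne_zero b (left_ne_zero_of_mul hn) i
    rw [← hd]
    refine (one_sub_re_stdAddChar_intCast_le d).trans ?_
    have : (d : ℝ) ^ 2 ≤ (K : ℝ) ^ 2 := by
      rw [← sq_abs]
      exact pow_le_pow_left₀ (abs_nonneg _) (by exact_mod_cast hdK.le) 2
    gcongr
  · have hν₀ : ν 0 = K ^ t := flatteningWeight_zero b hK
    rw [hμ.sum_norm_ftR, hν₀, mul_div_assoc', div_le_iff₀ hS₀, div_pow,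
      div_mul_eq_mul_div, le_div_iff₀ (by positivity)]
    calc (N : ℝ) * K ^ t * K ^ t = N * ((K : ℝ) ^ 2) ^ t := by ring
      _ ≤ N ^ t * S := hS

open Real in
lemma exists_scale_of_lt {ε : ℝ} (hε : 0 < ε) (hε₁ : ε < 1) {N : ℕ} (hN : 20 / ε < N) :
    ∃ K : ℕ, 0 < K ∧ K ≤ N ∧ (N / K : ℝ) ≤ 6 / ε ∧ 2 * π ^ 2 * K ^ 2 / N ^ 2 < ε ^ 2 := by
  have hεN : 20 < ε * N := by rw [div_lt_iff₀ hε] at hN; linarith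
  have hN₀ : (0 : ℝ) < N := by nlinarith
  obtain ⟨K, hK_gt, hK_le⟩ : ∃ K : ℕ, ε * N / 6 < K ∧ (K : ℝ) ≤ ε * N / 6 + 1 :=
    ⟨⌊ε * N / 6⌋₊ + 1, by push_cast; exact Nat.lt_floor_add_one _,
      by push_cast; linarith [Nat.floor_le (by positivity : 0 ≤ ε * N / 6)]⟩
  have hK₀ : (0 : ℝ) < K := lt_trans (by positivity) hK_gt
  refine ⟨K, by exact_mod_cast hK₀, ?_, ?_, ?_⟩
  · exact_mod_cast (show (K : ℝ) ≤ N by nlinarith)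
  · rw [div_le_div_iff₀ hK₀ hε]; linarith
  · -- `2π² < 20`, and `20 (x/6 + 1)² < x²` once `x = εN > 20`
    have hπ : π ^ 2 < 10 := by nlinarith [pi_lt_d2, pi_pos]
    rw [div_lt_iff₀ (by positivity)]
    nlinarith [mul_le_mul hK_le hK_le hK₀.le (by positivity)]

theorem flattening_weight_exists_general (t : ℕ) (ε : ℝ) (hε : 0 < ε) (hε1 : ε < 1) :
    ∃ p₀ : ℕ, ∀ p : ℕ, p.Prime → p₀ < p → ∀ b : Fin t → ZMod p,
      ∃ μ : ZMod p → ℝ,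
        (∀ n, μ n ∈ Set.Icc (0 : ℝ) 1) ∧
        ftR p μ 0 = 1 ∧
        (∀ i : Fin t, ‖ftR p μ (b i) - 1‖ < ε ^ 2) ∧
        (∑ a ∈ Finset.range p, ‖ftR p μ (a : ZMod p)‖) ≤ (6 / ε) ^ t := by
  refine ⟨⌈20 / ε⌉₊, fun p _ hp b => ?_⟩
  have : NeZero p := ⟨by omega⟩
  obtain ⟨K, hK₀, hKp, hratio, hflat⟩ := exists_scale_of_lt hε hε1 (Nat.lt_of_ceil_lt hp)
  obtain ⟨μ, hμ, hμ₀, hμb, hμsum⟩ := exists_flat_weight hK₀ hKp b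
  refine ⟨μ, hμ, hμ₀, fun i => (hμb i).trans_lt hflat, ?_⟩
  rw [sum_range_eq_sum_zmod fun a => ‖ftR p μ a‖]
  simp only [natCast_zmod_val]
  exact hμsum.trans (pow_le_pow_left₀ (by positivity) hratio t)

theorem flattening_weight_exists (t : ℕ) (ht : 1 ≤ t) (ε : ℝ) (hε : 0 < ε) (hε1 : ε < 1) :
    ∃ p₀ : ℕ, ∀ p : ℕ, p.Prime → p₀ < p → ∀ b : Fin t → ZMod p,
      ∃ μ : ZMod p → ℝ,
        (∀ n, μ n ∈ Set.Icc (0 : ℝ) 1) ∧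
        ftR p μ 0 = 1 ∧
        (∀ i : Fin t, ‖ftR p μ (b i) - 1‖ < ε ^ 2) ∧
        (∑ a ∈ Finset.range p, ‖ftR p μ (a : ZMod p)‖) ≤ (6 / ε) ^ t :=
  flattening_weight_exists_general t ε hε hε1
end

section
/- There exists p₀ such that for every prime p > p₀ and every subset S ⊆ ℤ/pℤ with p/3 < |S| < 2p/5, one has Σ_{n ∈ ℤ/pℤ} r(n)² < 0.856·|S|³, where r(n) denotes the number of pairs (s₁, s₂) ∈ S × S with s₁ + s₂ = n in ℤ/pℤ. -/
open Finset

/-- `r(n)`: the number of pairs `(s₁, s₂) ∈ S × S` with `s₁ + s₂ = n` in `ℤ/p`. -/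
def rep {p : ℕ} (S : Finset (ZMod p)) (n : ZMod p) : ℕ :=
  ((S ×ˢ S).filter (fun q => q.1 + q.2 = n)).card

/-!
`∑ₙ r(n)²` is the additive energy of `S`, which also equals `∑ₓ c(x)²` for
`c(x) = |S ∩ (x + S)|`. The defect `d(x) = |S| - c(x) = |S \ (x + S)|` is subadditive with
`d(0) = 0`, so its sublevel sets `A_T = {d ≤ T}` satisfy `A_T + A_{T'} ⊆ A_{T + T'}`, and
Cauchy–Davenport gives `|A_T| + |A_{L - T}| ≤ |A_L| + 1` as long as `A_L ≠ ℤ/p`. A sequence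
that is superadditive up to this `+ 1` carries its mass `∑_{T < |S|} |A_T| = |S|²` towards large
`T`, which by Abel summation bounds the energy by `(2/3)|S|³ + |S|²`; the levels at which `A_T`
is all of `ℤ/p` only help, because `2|S| ≤ p`. For `|S| ≥ 6` this is below `0.856 |S|³`.
-/

open scoped Pointwise Combinatorics.Additive

section AddGroup

variable {G : Type*} [AddGroup G] [DecidableEq G]

lemma Finset.card_sdiff_add_vadd_le (s : Finset G) (x y : G) :
    #(s \ ((x + y) +ᵥ s)) ≤ #(s \ (x +ᵥ s)) + #(s \ (y +ᵥ s)) := by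
  calc #(s \ ((x + y) +ᵥ s)) ≤ #((s \ (x +ᵥ s)) ∪ ((x +ᵥ s) \ (x +ᵥ (y +ᵥ s)))) := by
        refine card_le_card fun z hz => ?_
        rw [add_vadd] at hz
        simp only [mem_sdiff, mem_union] at hz ⊢
        tauto
    _ ≤ #(s \ (x +ᵥ s)) + #(s \ (y +ᵥ s)) := by
        rw [← vadd_finset_sdiff, ← card_vadd_finset x (s \ (y +ᵥ s))]
        exact card_union_le _ _

variable [Fintype G]

lemma Finset.sum_addConvolution (s t : Finset G) : ∑ x, s.addConvolution t x = #s * #t := by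
  rw [← card_product, card_eq_sum_card_fiberwise (f := fun ab => ab.1 + ab.2) (t := univ)
    (fun _ _ => mem_univ _)]
  rfl

lemma Finset.sum_card_inter_vadd (s : Finset G) : ∑ x : G, #(s ∩ (x +ᵥ s)) = #s ^ 2 := by
  simp_rw [card_inter_vadd, sum_addConvolution, card_neg, sq]

end AddGroup

section AddCommGroup

variable {G : Type*} [AddCommGroup G] [DecidableEq G]

lemma Finset.addEnergy_neg_right (s t : Finset G) : E[s, -t] = E[s, t] := by
  refine card_nbij' (fun x => (x.1, -x.2.2, -x.2.1)) (fun x => (x.1, -x.2.2, -x.2.1))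
    ?_ ?_ (by simp [Set.LeftInvOn]) (by simp [Set.LeftInvOn])
  all_goals
    simp only [Set.MapsTo, coe_filter, mem_product, mem_neg', neg_neg, Set.mem_ofPred_eq]
    rintro ⟨⟨a₁, a₂⟩, b₁, b₂⟩ ⟨⟨⟨ha₁, ha₂⟩, hb₁, hb₂⟩, h⟩
    refine ⟨⟨⟨ha₁, ha₂⟩, hb₂, hb₁⟩, ?_⟩
    rwa [← sub_eq_add_neg, ← sub_eq_add_neg, sub_eq_sub_iff_add_eq_add]

lemma Finset.sum_card_inter_vadd_sq [Fintype G] (s : Finset G) :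
    ∑ x : G, #(s ∩ (x +ᵥ s)) ^ 2 = E[s] := by
  rw [← addEnergy_neg_right, addEnergy_eq_sum_sq]
  simp_rw [card_inter_vadd, card_add_eq]

end AddCommGroup

lemma ZMod.sum_range_natCast {M : Type*} [AddCommMonoid M] (p : ℕ) [NeZero p]
    (f : ZMod p → M) : ∑ n ∈ range p, f n = ∑ x, f x :=
  sum_nbij' (↑) ZMod.val (fun _ _ => mem_univ _) (fun x _ => mem_range.mpr x.val_lt)
    (fun _ hn => ZMod.val_natCast_of_lt (mem_range.mp hn)) (fun x _ => ZMod.natCast_zmod_val x)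
    (fun _ _ => rfl)

lemma sum_sub_eq_sum_range_mul_card {α : Type*} [Fintype α] {d : α → ℕ} {m : ℕ}
    (hd : ∀ x, d x ≤ m) (g : ℕ → ℝ) :
    ∑ x, (g (d x) - g m) = ∑ T ∈ range m, (g T - g (T + 1)) * #{x | d x ≤ T} := by
  have hx : ∀ x, g (d x) - g m = ∑ T ∈ range m, if d x ≤ T then g T - g (T + 1) else 0 := by
    intro x
    rw [← sum_filter, ← neg_sub, ← sum_Ico_sub _ (hd x), ← sum_neg_distrib]
    congr 1
    · ext T; simp only [mem_filter, mem_range, mem_Ico]; omega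
    · ext T; ring
  simp_rw [hx, sum_comm (s := univ), ← sum_filter, sum_const, nsmul_eq_mul, mul_comm]

lemma two_mul_sum_range_id (n : ℕ) : 2 * ∑ T ∈ range n, (T : ℝ) = n * (n - 1) := by
  induction n with
  | zero => simp
  | succ n ih => rw [sum_range_succ, mul_add, ih]; push_cast; ring

section AlmostSuperadditive

variable {a : ℕ → ℝ}

lemma two_mul_sum_range_succ_le {L : ℕ} (h : ∀ T ≤ L, a T + a (L - T) ≤ a L + 1) :
    2 * ∑ T ∈ range (L + 1), a T ≤ (L + 1) * (a L + 1) := by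
  have hreflect : ∑ T ∈ range (L + 1), a (L - T) = ∑ T ∈ range (L + 1), a T := by
    simpa using sum_range_reflect a (L + 1)
  calc 2 * ∑ T ∈ range (L + 1), a T
      = ∑ T ∈ range (L + 1), (a T + a (L - T)) := by rw [sum_add_distrib, hreflect]; ring
    _ ≤ ∑ _T ∈ range (L + 1), (a L + 1) :=
        sum_le_sum fun T hT => h T (Nat.lt_succ_iff.mp (mem_range.mp hT))
    _ = (L + 1) * (a L + 1) := by simp; ring

lemma two_mul_sub_one_mul_sum_range_le {n : ℕ}
    (h : ∀ L < n, ∀ T ≤ L, a T + a (L - T) ≤ a L + 1) :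
    (2 * n - 1) * ∑ T ∈ range n, a T ≤ 3 * ∑ T ∈ range n, T * a T + n * (n + 1) / 2 := by
  induction n with
  | zero => simp
  | succ n ih =>
    have hpair := two_mul_sum_range_succ_le (h n n.lt_succ_self)
    rw [sum_range_succ] at hpair
    simp only [sum_range_succ]
    push_cast
    linarith [ih fun L hL => h L (hL.trans n.lt_succ_self)]

lemma le_three_mul_sum_range_mul {m : ℕ} {p : ℝ} (hmp : 2 * m ≤ p) (hmono : Monotone a)
    (hap : ∀ T, a T ≤ p) (hcd : ∀ L, a L < p → ∀ T ≤ L, a T + a (L - T) ≤ a L + 1)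
    (hsum : ∑ T ∈ range m, a T = m ^ 2) :
    2 * m ^ 3 - 3 * m ^ 2 ≤ 3 * ∑ T ∈ range m, T * a T := by
  have hex : ∃ l, m ≤ l ∨ p ≤ a l := ⟨m, .inl le_rfl⟩
  set l := Nat.find hex
  have hlm : l ≤ m := Nat.find_le (.inl le_rfl)
  have hunsat : ∀ T < l, a T < p := fun T hT => by
    simpa using (not_or.mp (Nat.find_min hex hT)).2
  have hsat : ∀ T ∈ Ico l m, a T = p := fun T hT => by
    obtain ⟨hlT, hTm⟩ := mem_Ico.mp hT
    refine le_antisymm (hap T) ?_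
    rcases Nat.find_spec hex with h | h
    · omega
    · exact h.trans (hmono hlT)
  have hlow := two_mul_sub_one_mul_sum_range_le fun L hL => hcd L (hunsat L hL)
  rw [← sum_range_add_sum_Ico _ hlm, sum_congr rfl hsat, sum_const, Nat.card_Ico,
    nsmul_eq_mul, Nat.cast_sub hlm] at hsum
  have hIco : 2 * ∑ T ∈ Ico l m, T * a T = (m * (m - 1) - l * (l - 1)) * p := by
    rw [sum_congr rfl fun T hT => by rw [hsat T hT], ← sum_mul, ← mul_assoc,
      ← two_mul_sum_range_id, ← two_mul_sum_range_id, ← sum_range_add_sum_Ico _ hlm]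
    ring
  rw [← sum_range_add_sum_Ico _ hlm]
  rw [show ∑ T ∈ range l, a T = m ^ 2 - (m - l) * p by linarith] at hlow
  have hl : (l : ℝ) ≤ m := by exact_mod_cast hlm
  have hs : 0 ≤ ((m : ℝ) - l) * (m - l - 1) := by
    rcases Nat.eq_or_lt_of_le hlm with h | h
    · simp [h]
    · have : (l : ℝ) + 1 ≤ m := by exact_mod_cast h
      nlinarith
  have hm2 : (m : ℝ) ≤ m ^ 2 := by exact_mod_cast Nat.le_self_pow two_ne_zero m
  have hl2 : (l : ℝ) * (l + 1) ≤ 4 * m ^ 2 := by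
    nlinarith [(Nat.cast_nonneg l : (0 : ℝ) ≤ l)]
  -- with `s = m - l` the slack is
  -- `(p - 2m) s (2m + s - 1) / 2 + m s (s - 1) + 2m² - l (l + 1) / 2`
  linarith [mul_nonneg (sub_nonneg.mpr hmp) (add_nonneg hs
      (mul_nonneg (mul_nonneg zero_le_two (Nat.cast_nonneg (α := ℝ) m)) (sub_nonneg.mpr hl))),
    mul_nonneg (Nat.cast_nonneg (α := ℝ) m) hs]

end AlmostSuperadditive

section LengthFunction

variable {p : ℕ} [Fact p.Prime] {d : ZMod p → ℕ}

lemma card_filter_le_add_card_filter_le (hd0 : d 0 = 0) (hd : ∀ x y, d (x + y) ≤ d x + d y)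
    {T L : ℕ} (hTL : T ≤ L) (hL : #{x | d x ≤ L} < p) :
    #{x | d x ≤ T} + #{x | d x ≤ L - T} ≤ #{x | d x ≤ L} + 1 := by
  set A : ℕ → Finset (ZMod p) := fun T => {x | d x ≤ T} with hA
  change #(A L) < p at hL
  change #(A T) + #(A (L - T)) ≤ #(A L) + 1
  have hsub : A T + A (L - T) ⊆ A L := by
    intro z hz
    obtain ⟨x, hx, y, hy, rfl⟩ := mem_add.mp hz
    simp only [hA, mem_filter, mem_univ, true_and] at hx hy ⊢
    have := hd x y
    omega
  have := ZMod.cauchy_davenport Fact.out (s := A T) (t := A (L - T))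
    ⟨0, by simp [A, hd0]⟩ ⟨0, by simp [A, hd0]⟩
  have := card_le_card hsub
  omega

theorem three_mul_sum_sq_sub_le (hd0 : d 0 = 0) (hd : ∀ x y, d (x + y) ≤ d x + d y) {m : ℕ}
    (hdm : ∀ x, d x ≤ m) (hsum : ∑ x, ((m : ℝ) - d x) = m ^ 2) (hmp : 2 * m ≤ p) :
    3 * ∑ x, ((m : ℝ) - d x) ^ 2 ≤ 2 * m ^ 3 + 3 * m ^ 2 := by
  set a : ℕ → ℝ := fun T => #{x | d x ≤ T}
  have hmass : ∑ T ∈ range m, a T = m ^ 2 := by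
    simpa [← hsum] using (sum_sub_eq_sum_range_mul_card hdm fun k => (m : ℝ) - k).symm
  have hsq :
      ∑ x, ((m : ℝ) - d x) ^ 2 = ∑ T ∈ range m, ((2 * m - 1) * a T - 2 * (T * a T)) := by
    convert sum_sub_eq_sum_range_mul_card hdm (fun k => ((m : ℝ) - k) ^ 2) using 2 with x - T -
    · ring
    · push_cast; ring
  have hmono : Monotone a := fun T T' h => by
    simp only [a, Nat.cast_le]
    exact card_le_card fun x hx => by simp only [mem_filter, mem_univ, true_and] at hx ⊢; omega
  have hap : ∀ T, a T ≤ p := fun T => by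
    simp only [a, Nat.cast_le]
    exact (card_le_univ _).trans (ZMod.card p).le
  have hcd : ∀ L, a L < p → ∀ T ≤ L, a T + a (L - T) ≤ a L + 1 := fun L hL T hT => by
    simp only [a, Nat.cast_lt] at hL ⊢
    exact_mod_cast card_filter_le_add_card_filter_le hd0 hd hT hL
  have key := le_three_mul_sum_range_mul (by exact_mod_cast hmp) hmono hap hcd hmass
  rw [hsq, sum_sub_distrib, ← mul_sum, ← mul_sum, hmass]
  linarith

end LengthFunction

theorem ZMod.three_mul_addEnergy_le {p : ℕ} [Fact p.Prime] (S : Finset (ZMod p))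
    (h : 2 * #S ≤ p) : 3 * (E[S] : ℝ) ≤ 2 * #S ^ 3 + 3 * #S ^ 2 := by
  have hinter : ∀ x : ZMod p, (#(S ∩ (x +ᵥ S)) : ℝ) = #S - #(S \ (x +ᵥ S)) := fun x => by
    rw [← card_inter_add_card_sdiff S (x +ᵥ S)]; push_cast; ring
  have hsum : ∑ x : ZMod p, ((#S : ℝ) - #(S \ (x +ᵥ S))) = #S ^ 2 := by
    simp_rw [← hinter]; exact_mod_cast sum_card_inter_vadd S
  rw [← sum_card_inter_vadd_sq]
  push_cast
  simp_rw [hinter]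
  exact three_mul_sum_sq_sub_le (by simp) (card_sdiff_add_vadd_le S)
    (fun x => card_le_card sdiff_subset) hsum h

theorem sum_sq_representations_lt :
    ∃ p₀ : ℕ, ∀ p : ℕ, p.Prime → p₀ < p →
      ∀ S : Finset (ZMod p),
        (p : ℝ) / 3 < S.card → (S.card : ℝ) < 2 * p / 5 →
        (∑ n ∈ Finset.range p, (rep S (n : ZMod p) : ℝ) ^ 2) <
          0.856 * (S.card : ℝ) ^ 3 := by
  refine ⟨17, fun p hp hp₀ S hlow hup => ?_⟩
  have := Fact.mk hp
  have hp18 : (18 : ℝ) ≤ p := by exact_mod_cast hp₀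
  have hS : (6 : ℝ) ≤ #S := by
    have : 5 < #S := by exact_mod_cast (by linarith : (5 : ℝ) < #S)
    exact_mod_cast this
  have hE := ZMod.three_mul_addEnergy_le S (by exact_mod_cast (by linarith : 2 * (#S : ℝ) ≤ p))
  have hrep : ∑ x, (rep S x : ℝ) ^ 2 = E[S] := by exact_mod_cast (addEnergy_eq_sum_sq S S).symm
  rw [ZMod.sum_range_natCast p fun n => (rep S n : ℝ) ^ 2, hrep]
  nlinarith
end
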